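/- arXiv:0711.3715 — 2 statements merged into one kernel-verified Lean document; each statement's English description precedes it below -/
import Mathlib

section
/- For any density operators ρ, σ, ξ on a finite-dimensional complex Hilbert space, F(ρ,σ)² + F(σ,ξ)² ≤ 1 + F(ρ,ξ), where F denotes the fidelity F(ρ,σ) = tr√(√ρ σ √ρ). -/
/-!
Write `F(ρ,σ) = ‖√σ √ρ‖₁`. By the polar decomposition there are unitaries `U`, `W` with
`tr (U √σ √ρ) = F(ρ,σ)` and `tr (W √ξ √σ) = F(σ,ξ)`. In the Hilbert–Schmidt space of matrices,
`u = √ρ U`, `v = √σ` and `w = √ξ W⋆` are unit vectors with `⟪v,u⟫ = F(ρ,σ)`, `⟪v,w⟫ = F(σ,ξ)`,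
while `|⟪u,w⟫| = |tr (U W √ξ √ρ)| ≤ F(ρ,ξ)`. Finally, for unit vectors with real `x = ⟪v,u⟫`,
`y = ⟪v,w⟫`, testing `v` against `x u + y w` gives
`(x² + y²)² ≤ ‖x u + y w‖² ≤ (x² + y²) (1 + |⟪u,w⟫|)`.
-/

open scoped ComplexOrder

open scoped Classical in
noncomputable def matSqrt {n : ℕ} (A : Matrix (Fin n) (Fin n) ℂ) : Matrix (Fin n) (Fin n) ℂ :=
  if h : A.PosSemidef then
    (h.1.eigenvectorUnitary : Matrix (Fin n) (Fin n) ℂ) *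
      Matrix.diagonal ((↑) ∘ (Real.sqrt ·) ∘ h.1.eigenvalues) *
      (star h.1.eigenvectorUnitary : Matrix (Fin n) (Fin n) ℂ)
  else 0

/-- Fidelity F(ρ,σ) = tr √(√ρ σ √ρ). -/
noncomputable def fid {n : ℕ} (ρ σ : Matrix (Fin n) (Fin n) ℂ) : ℝ :=
  ((matSqrt (matSqrt ρ * σ * matSqrt ρ)).trace).re

open scoped MatrixOrder InnerProductSpace
open Matrix

variable {𝕜 : Type*} [RCLike 𝕜]

theorem LinearIsometry.exists_apply_eq_of_norm_eq {E V : Type*} [AddCommGroup E] [Module 𝕜 E]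
    [NormedAddCommGroup V] [InnerProductSpace 𝕜 V] [FiniteDimensional 𝕜 V] (f g : E →ₗ[𝕜] V)
    (h : ∀ x, ‖f x‖ = ‖g x‖) : ∃ U : V →ₗᵢ[𝕜] V, ∀ x, U (f x) = g x := by
  have hker : LinearMap.ker f ≤ LinearMap.ker g := fun x hx => by
    rw [LinearMap.mem_ker, ← norm_eq_zero, ← h, norm_eq_zero]
    exact hx
  let L : LinearMap.range f →ₗ[𝕜] V :=
    (LinearMap.ker f).liftQ g hker ∘ₗ f.quotKerEquivRange.symm.toLinearMap
  have hL : ∀ x, L ⟨f x, LinearMap.mem_range_self f x⟩ = g x := fun x => by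
    simp [L, LinearMap.quotKerEquivRange_symm_apply_image]
  let L' : LinearMap.range f →ₗᵢ[𝕜] V :=
    { L with norm_map' := by rintro ⟨_, x, rfl⟩; exact (congrArg norm (hL x)).trans (h x).symm }
  exact ⟨L'.extend, fun x => (L'.extend_apply ⟨f x, LinearMap.mem_range_self f x⟩).trans (hL x)⟩

theorem sq_add_sq_le_one_add_norm_inner {E : Type*} [NormedAddCommGroup E] [InnerProductSpace 𝕜 E]
    {u v w : E} (hu : ‖u‖ ≤ 1) (hv : ‖v‖ ≤ 1) (hw : ‖w‖ ≤ 1) {x y : ℝ} (hx : ⟪v, u⟫_𝕜 = x)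
    (hy : ⟪v, w⟫_𝕜 = y) : x ^ 2 + y ^ 2 ≤ 1 + ‖⟪u, w⟫_𝕜‖ := by
  set a : E := (x : 𝕜) • u + (y : 𝕜) • w
  set r := RCLike.re ⟪u, w⟫_𝕜
  have hva : ⟪v, a⟫_𝕜 = ((x ^ 2 + y ^ 2 : ℝ) : 𝕜) := by
    simp only [a, inner_add_right, inner_smul_right, hx, hy]
    push_cast
    ring
  have hsa : x ^ 2 + y ^ 2 ≤ ‖a‖ :=
    calc x ^ 2 + y ^ 2 = ‖⟪v, a⟫_𝕜‖ := by
          rw [hva, RCLike.norm_ofReal, abs_of_nonneg (by positivity)]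
      _ ≤ ‖v‖ * ‖a‖ := norm_inner_le_norm _ _
      _ ≤ ‖a‖ := mul_le_of_le_one_left (norm_nonneg _) hv
  have ha : ‖a‖ ^ 2 ≤ x ^ 2 + y ^ 2 + 2 * x * y * r := by
    have hre : RCLike.re ⟪(x : 𝕜) • u, (y : 𝕜) • w⟫_𝕜 = x * y * r := by
      rw [inner_smul_left, inner_smul_right, RCLike.conj_ofReal, ← mul_assoc, ← RCLike.ofReal_mul,
        RCLike.re_ofReal_mul]
    have hsmul : ∀ (t : ℝ) (e : E), ‖e‖ ≤ 1 → ‖(t : 𝕜) • e‖ ^ 2 ≤ t ^ 2 := fun t e he => by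
      rw [norm_smul, RCLike.norm_ofReal, mul_pow, sq_abs]
      exact mul_le_of_le_one_right (sq_nonneg t) (pow_le_one₀ (norm_nonneg e) he)
    rw [norm_add_sq (𝕜 := 𝕜), hre]
    linarith [hsmul x u hu, hsmul y w hw]
  have hr : 2 * x * y * r ≤ (x ^ 2 + y ^ 2) * ‖⟪u, w⟫_𝕜‖ := by
    have := abs_le.mp ((RCLike.abs_re_le_norm ⟪u, w⟫_𝕜))
    nlinarith [sq_nonneg (x - y), sq_nonneg (x + y), norm_nonneg ⟪u, w⟫_𝕜]
  nlinarith [norm_nonneg a, norm_nonneg ⟪u, w⟫_𝕜]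

variable {m n : Type*} [Fintype m] [Fintype n]

lemma Matrix.IsHermitian.coe_re_trace {A : Matrix n n 𝕜} (hA : A.IsHermitian) :
    (RCLike.re A.trace : 𝕜) = A.trace :=
  RCLike.conj_eq_iff_re.mp (by rw [← RCLike.star_def, ← trace_conjTranspose, hA.eq])

noncomputable def Matrix.vecL2 (A : Matrix m n 𝕜) : EuclideanSpace 𝕜 (n × m) :=
  WithLp.toLp 2 A.vec

lemma Matrix.inner_vecL2 (A B : Matrix m n 𝕜) : ⟪A.vecL2, B.vecL2⟫_𝕜 = (Aᴴ * B).trace := by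
  rw [vecL2, vecL2, EuclideanSpace.inner_toLp_toLp, dotProduct_comm, star_vec_dotProduct_vec]

lemma Matrix.norm_vecL2_sq (A : Matrix m n 𝕜) : ‖A.vecL2‖ ^ 2 = RCLike.re (Aᴴ * A).trace := by
  rw [← inner_vecL2, inner_self_eq_norm_sq]

lemma Matrix.inner_vecL2_mul {A : Matrix n n 𝕜} (hA : Aᴴ = A) (B X : Matrix n n 𝕜) :
    ⟪A.vecL2, (B * X).vecL2⟫_𝕜 = (X * (A * B)).trace := by
  rw [inner_vecL2, hA, ← Matrix.mul_assoc, trace_mul_comm]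

lemma Matrix.inner_vecL2_mul_mul_star {A B : Matrix n n 𝕜} (hA : Aᴴ = A) (hB : Bᴴ = B)
    (X Y : Matrix n n 𝕜) :
    ⟪(A * X).vecL2, (B * star Y).vecL2⟫_𝕜 = star (X * Y * (B * A)).trace := by
  rw [inner_vecL2, ← trace_conjTranspose]
  simp only [conjTranspose_mul, hA, hB, star_eq_conjTranspose, Matrix.mul_assoc]
  rw [trace_mul_comm]
  simp only [Matrix.mul_assoc]

variable [DecidableEq n]

lemma Matrix.norm_vecL2_mul_unitary (A : Matrix m n 𝕜) {U : Matrix n n 𝕜}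
    (hU : U ∈ unitaryGroup n 𝕜) : ‖(A * U).vecL2‖ = ‖A.vecL2‖ := by
  have h : (A * U)ᴴ * (A * U) = Uᴴ * (Aᴴ * A * U) := by
    simp only [conjTranspose_mul, Matrix.mul_assoc]
  rw [← sq_eq_sq₀ (norm_nonneg _) (norm_nonneg _), norm_vecL2_sq, norm_vecL2_sq, h,
    trace_mul_comm, Matrix.mul_assoc, ← star_eq_conjTranspose, mem_unitaryGroup_iff.mp hU,
    Matrix.mul_one]

lemma Matrix.conjTranspose_sqrt (A : Matrix n n 𝕜) : (CFC.sqrt A)ᴴ = CFC.sqrt A :=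
  (nonneg_iff_posSemidef.mp (CFC.sqrt_nonneg A)).1.eq

lemma Matrix.norm_vecL2_sqrt_sq {A : Matrix n n 𝕜} (hA : A.PosSemidef) :
    ‖(CFC.sqrt A).vecL2‖ ^ 2 = RCLike.re A.trace := by
  rw [norm_vecL2_sq, conjTranspose_sqrt, CFC.sqrt_mul_sqrt_self A hA.nonneg]

lemma Matrix.norm_vecL2_sqrt_eq_one {A : Matrix n n 𝕜} (hA : A.PosSemidef) (hA1 : A.trace = 1) :
    ‖(CFC.sqrt A).vecL2‖ = 1 := by
  rw [← pow_eq_one_iff_of_nonneg (norm_nonneg _) two_ne_zero, norm_vecL2_sqrt_sq hA, hA1,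
    RCLike.one_re]

lemma Matrix.norm_trace_unitary_mul_le {P W : Matrix n n 𝕜} (hP : P.PosSemidef)
    (hW : W ∈ unitaryGroup n 𝕜) : ‖(W * P).trace‖ ≤ RCLike.re P.trace := by
  set Q := CFC.sqrt P
  have htr : ⟪Q.vecL2, (Q * W).vecL2⟫_𝕜 = (W * P).trace := by
    rw [inner_vecL2, conjTranspose_sqrt, ← Matrix.mul_assoc, trace_mul_comm,
      CFC.sqrt_mul_sqrt_self P hP.nonneg]
  calc ‖(W * P).trace‖ ≤ ‖Q.vecL2‖ * ‖(Q * W).vecL2‖ := htr ▸ norm_inner_le_norm _ _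
    _ = RCLike.re P.trace := by rw [norm_vecL2_mul_unitary Q hW, ← sq, norm_vecL2_sqrt_sq hP]

lemma Matrix.norm_toEuclideanCLM_apply_sq (A : Matrix n n 𝕜) (x : EuclideanSpace 𝕜 n) :
    ‖toEuclideanCLM (𝕜 := 𝕜) A x‖ ^ 2 = RCLike.re ⟪x, toEuclideanCLM (𝕜 := 𝕜) (Aᴴ * A) x⟫_𝕜 := by
  rw [map_mul, ← star_eq_conjTranspose, map_star, ContinuousLinearMap.star_eq_adjoint,
    mul_apply_eq_comp, ContinuousLinearMap.adjoint_inner_right, inner_self_eq_norm_sq]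

theorem Matrix.exists_mem_unitaryGroup_eq_mul_of_conjTranspose_mul_self_eq {A B : Matrix n n 𝕜}
    (h : Aᴴ * A = Bᴴ * B) : ∃ U ∈ unitaryGroup n 𝕜, B = U * A := by
  obtain ⟨U, hU⟩ := LinearIsometry.exists_apply_eq_of_norm_eq
    (toEuclideanCLM (𝕜 := 𝕜) A).toLinearMap (toEuclideanCLM (𝕜 := 𝕜) B).toLinearMap fun x => by
      rw [← sq_eq_sq₀ (norm_nonneg _) (norm_nonneg _)]
      simp only [ContinuousLinearMap.coe_coe, norm_toEuclideanCLM_apply_sq, h]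
  refine ⟨(toEuclideanCLM (𝕜 := 𝕜) (n := n)).symm U.toContinuousLinearMap, ?_, ?_⟩
  · rw [mem_unitaryGroup_iff']
    apply EquivLike.injective (toEuclideanCLM (𝕜 := 𝕜) (n := n))
    rw [map_mul, map_star, StarAlgEquiv.apply_symm_apply, ContinuousLinearMap.star_eq_adjoint,
      map_one, ← (ContinuousLinearMap.norm_map_iff_adjoint_comp_self U.toContinuousLinearMap).mp
        U.norm_map]
    rfl
  · apply EquivLike.injective (toEuclideanCLM (𝕜 := 𝕜) (n := n))
    ext1 x
    rw [map_mul, StarAlgEquiv.apply_symm_apply, mul_apply_eq_comp]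
    exact (hU x).symm

theorem Matrix.exists_mem_unitaryGroup_eq_mul_sqrt (B : Matrix n n 𝕜) :
    ∃ U ∈ unitaryGroup n 𝕜, B = U * CFC.sqrt (Bᴴ * B) :=
  exists_mem_unitaryGroup_eq_mul_of_conjTranspose_mul_self_eq <| by
    rw [conjTranspose_sqrt, CFC.sqrt_mul_sqrt_self _ (posSemidef_conjTranspose_mul_self B).nonneg]

noncomputable def Matrix.traceNorm (B : Matrix n n 𝕜) : ℝ :=
  RCLike.re (CFC.sqrt (Bᴴ * B)).trace

theorem Matrix.exists_mem_unitaryGroup_trace_mul_eq_traceNorm (B : Matrix n n 𝕜) :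
    ∃ U ∈ unitaryGroup n 𝕜, (U * B).trace = B.traceNorm := by
  obtain ⟨V, hV, hB⟩ := exists_mem_unitaryGroup_eq_mul_sqrt B
  refine ⟨star V, Unitary.star_mem hV, ?_⟩
  rw [traceNorm, (nonneg_iff_posSemidef.mp (CFC.sqrt_nonneg _)).1.coe_re_trace]
  nth_rw 1 [hB]
  rw [← Matrix.mul_assoc, Unitary.star_mul_self_of_mem hV, Matrix.one_mul]

theorem Matrix.norm_trace_unitary_mul_le_traceNorm (B : Matrix n n 𝕜) {W : Matrix n n 𝕜}
    (hW : W ∈ unitaryGroup n 𝕜) : ‖(W * B).trace‖ ≤ B.traceNorm := by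
  obtain ⟨V, hV, hB⟩ := exists_mem_unitaryGroup_eq_mul_sqrt B
  nth_rw 1 [hB]
  rw [← Matrix.mul_assoc]
  exact norm_trace_unitary_mul_le (nonneg_iff_posSemidef.mp (CFC.sqrt_nonneg _)) (mul_mem hW hV)

lemma matSqrt_eq_sqrt {n : ℕ} {A : Matrix (Fin n) (Fin n) ℂ} (hA : A.PosSemidef) :
    matSqrt A = CFC.sqrt A := by
  rw [CFC.sqrt_eq_real_sqrt A hA.nonneg, cfcₙ_eq_cfc, hA.1.cfc_eq, IsHermitian.cfc,
    Unitary.conjStarAlgAut_apply, matSqrt, dif_pos hA]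
  rfl

lemma fid_eq_traceNorm {n : ℕ} {ρ σ : Matrix (Fin n) (Fin n) ℂ} (hρ : ρ.PosSemidef)
    (hσ : σ.PosSemidef) : fid ρ σ = (CFC.sqrt σ * CFC.sqrt ρ).traceNorm := by
  have h : (CFC.sqrt σ * CFC.sqrt ρ)ᴴ * (CFC.sqrt σ * CFC.sqrt ρ) = CFC.sqrt ρ * σ * CFC.sqrt ρ := by
    rw [conjTranspose_mul, conjTranspose_sqrt, conjTranspose_sqrt, Matrix.mul_assoc (CFC.sqrt ρ),
      ← Matrix.mul_assoc (CFC.sqrt σ), CFC.sqrt_mul_sqrt_self σ hσ.nonneg, Matrix.mul_assoc]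
  rw [fid, matSqrt_eq_sqrt hρ, ← h, matSqrt_eq_sqrt (posSemidef_conjTranspose_mul_self _)]
  rfl

theorem stmt0 {n : ℕ} (ρ σ ξ : Matrix (Fin n) (Fin n) ℂ)
    (hρ : ρ.PosSemidef) (hσ : σ.PosSemidef) (hξ : ξ.PosSemidef)
    (hρ1 : ρ.trace = 1) (hσ1 : σ.trace = 1) (hξ1 : ξ.trace = 1) :
    fid ρ σ ^ 2 + fid σ ξ ^ 2 ≤ 1 + fid ρ ξ := by
  rw [fid_eq_traceNorm hρ hσ, fid_eq_traceNorm hσ hξ, fid_eq_traceNorm hρ hξ]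
  set R := CFC.sqrt ρ
  set S := CFC.sqrt σ
  set T := CFC.sqrt ξ
  have hR : Rᴴ = R := conjTranspose_sqrt ρ
  have hS : Sᴴ = S := conjTranspose_sqrt σ
  have hT : Tᴴ = T := conjTranspose_sqrt ξ
  obtain ⟨U, hU, hUtr⟩ := exists_mem_unitaryGroup_trace_mul_eq_traceNorm (S * R)
  obtain ⟨W, hW, hWtr⟩ := exists_mem_unitaryGroup_trace_mul_eq_traceNorm (T * S)
  have hvu : ⟪S.vecL2, (R * U).vecL2⟫_ℂ = (S * R).traceNorm := (inner_vecL2_mul hS R U).trans hUtr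
  have hvw : ⟪S.vecL2, (T * star W).vecL2⟫_ℂ = (T * S).traceNorm := by
    simpa [hWtr] using inner_vecL2_mul_mul_star hS hT 1 W
  have huw : ‖⟪(R * U).vecL2, (T * star W).vecL2⟫_ℂ‖ ≤ (T * R).traceNorm := by
    rw [inner_vecL2_mul_mul_star hR hT, norm_star]
    exact norm_trace_unitary_mul_le_traceNorm _ (mul_mem hU hW)
  have hu := (norm_vecL2_mul_unitary R hU).trans (norm_vecL2_sqrt_eq_one hρ hρ1)
  have hw := (norm_vecL2_mul_unitary T (Unitary.star_mem hW)).trans (norm_vecL2_sqrt_eq_one hξ hξ1)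
  linarith [sq_add_sq_le_one_add_norm_inner (x := (S * R).traceNorm) (y := (T * S).traceNorm)
    hu.le (norm_vecL2_sqrt_eq_one hσ hσ1).le hw.le hvu hvw]
end

section
/- Let H be a finite-dimensional complex inner product space, let α and β be unit vectors, let U₀, U₁ be unitaries on H, and let ψ be a unit vector. Then (1/2)(|⟨U₀† α, ψ⟩|² + |⟨U₁† β, ψ⟩|²) ≤ (1/2)(1 + |⟨α, U₀ U₁† β⟩|). -/
/-!
Moving the adjoints of the unitaries onto the other side reduces the claim to unit vectors
`a = U₀† α`, `b = U₁† β`: `|⟪a, ψ⟫|² + |⟪b, ψ⟫|² ≤ 1 + |⟪a, b⟫|`. For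
`v = ⟪a, ψ⟫ a + ⟪b, ψ⟫ b` one has `⟪v, ψ⟫ = S := |⟪a, ψ⟫|² + |⟪b, ψ⟫|²`, hence `S ≤ ‖v‖`,
while expanding `‖v‖²` and using `2 |x| |y| ≤ |x|² + |y|²` gives `‖v‖² ≤ S (1 + |⟪a, b⟫|)`.
Thus `S² ≤ S (1 + |⟪a, b⟫|)`.
-/

open scoped InnerProductSpace

section

variable {𝕜 E F : Type*} [RCLike 𝕜] [NormedAddCommGroup E] [InnerProductSpace 𝕜 E]
  [NormedAddCommGroup F] [InnerProductSpace 𝕜 F]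

lemma LinearMap.norm_adjoint_apply_of_comp_adjoint_eq_one [FiniteDimensional 𝕜 E]
    [FiniteDimensional 𝕜 F] {U : E →ₗ[𝕜] F} (hU : U ∘ₗ U.adjoint = 1) (z : F) :
    ‖U.adjoint z‖ = ‖z‖ := by
  have hUz : U (U.adjoint z) = z := congrArg (· z) hU
  have hsq : ‖U.adjoint z‖ ^ 2 = ‖z‖ ^ 2 := by
    rw [← inner_self_eq_norm_sq (𝕜 := 𝕜), ← inner_self_eq_norm_sq (𝕜 := 𝕜),
      LinearMap.adjoint_inner_left, hUz]
  exact (sq_eq_sq₀ (norm_nonneg _) (norm_nonneg _)).1 hsq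

lemma norm_smul_add_smul_sq_le {a b : E} (ha : ‖a‖ = 1) (hb : ‖b‖ = 1) (x y : 𝕜) :
    ‖x • a + y • b‖ ^ 2 ≤ (‖x‖ ^ 2 + ‖y‖ ^ 2) * (1 + ‖⟪a, b⟫_𝕜‖) := by
  have hcross : RCLike.re ⟪x • a, y • b⟫_𝕜 ≤ ‖x‖ * ‖y‖ * ‖⟪a, b⟫_𝕜‖ :=
    calc RCLike.re ⟪x • a, y • b⟫_𝕜 ≤ ‖⟪x • a, y • b⟫_𝕜‖ := RCLike.re_le_norm _
      _ = ‖x‖ * ‖y‖ * ‖⟪a, b⟫_𝕜‖ := by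
        rw [inner_smul_left, inner_smul_right, norm_mul, norm_mul, RCLike.norm_conj, mul_assoc]
  have hamgm : 2 * (‖x‖ * ‖y‖) ≤ ‖x‖ ^ 2 + ‖y‖ ^ 2 := by nlinarith [sq_nonneg (‖x‖ - ‖y‖)]
  rw [norm_add_sq (𝕜 := 𝕜), norm_smul, norm_smul, ha, hb]
  nlinarith [norm_nonneg ⟪a, b⟫_𝕜]

lemma norm_inner_sq_add_norm_inner_sq_le {a b ψ : E} (ha : ‖a‖ = 1) (hb : ‖b‖ = 1)
    (hψ : ‖ψ‖ = 1) :
    ‖⟪a, ψ⟫_𝕜‖ ^ 2 + ‖⟪b, ψ⟫_𝕜‖ ^ 2 ≤ 1 + ‖⟪a, b⟫_𝕜‖ := by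
  set S := ‖⟪a, ψ⟫_𝕜‖ ^ 2 + ‖⟪b, ψ⟫_𝕜‖ ^ 2
  set v := ⟪a, ψ⟫_𝕜 • a + ⟪b, ψ⟫_𝕜 • b
  have hvψ : ⟪v, ψ⟫_𝕜 = (S : 𝕜) := by
    simp only [v, S, inner_add_left, inner_smul_left, RCLike.conj_mul]
    push_cast; ring
  have hSv : S ≤ ‖v‖ :=
    calc S = ‖⟪v, ψ⟫_𝕜‖ := by rw [hvψ, RCLike.norm_ofReal, abs_of_nonneg (by positivity)]
      _ ≤ ‖v‖ := by simpa [hψ] using norm_inner_le_norm (𝕜 := 𝕜) v ψ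
  have hv : ‖v‖ ^ 2 ≤ S * (1 + ‖⟪a, b⟫_𝕜‖) := norm_smul_add_smul_sq_le ha hb _ _
  have hS : 0 ≤ S := by positivity
  nlinarith [norm_nonneg ⟪a, b⟫_𝕜]

end

theorem stmt10_general {H : Type*} [NormedAddCommGroup H] [InnerProductSpace ℂ H]
    [FiniteDimensional ℂ H]
    (U₀ U₁ : H →ₗ[ℂ] H)
    (hU02 : U₀ ∘ₗ LinearMap.adjoint U₀ = 1)
    (hU12 : U₁ ∘ₗ LinearMap.adjoint U₁ = 1)
    (α β ψ : H) (hα : ‖α‖ = 1) (hβ : ‖β‖ = 1) (hψ : ‖ψ‖ = 1) :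
    (1 / 2) * (‖inner (𝕜 := ℂ) (LinearMap.adjoint U₀ α) ψ‖ ^ 2
        + ‖inner (𝕜 := ℂ) (LinearMap.adjoint U₁ β) ψ‖ ^ 2)
      ≤ (1 / 2) * (1 + ‖inner (𝕜 := ℂ) α (U₀ (LinearMap.adjoint U₁ β))‖) := by
  rw [← LinearMap.adjoint_inner_left (𝕜 := ℂ)]
  have ha := LinearMap.norm_adjoint_apply_of_comp_adjoint_eq_one hU02 α
  have hb := LinearMap.norm_adjoint_apply_of_comp_adjoint_eq_one hU12 β
  have := norm_inner_sq_add_norm_inner_sq_le (𝕜 := ℂ) (ha.trans hα) (hb.trans hβ) hψ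
  linarith

theorem stmt10 {H : Type*} [NormedAddCommGroup H] [InnerProductSpace ℂ H]
    [FiniteDimensional ℂ H]
    (U₀ U₁ : H →ₗ[ℂ] H)
    (hU01 : LinearMap.adjoint U₀ ∘ₗ U₀ = 1) (hU02 : U₀ ∘ₗ LinearMap.adjoint U₀ = 1)
    (hU11 : LinearMap.adjoint U₁ ∘ₗ U₁ = 1) (hU12 : U₁ ∘ₗ LinearMap.adjoint U₁ = 1)
    (α β ψ : H) (hα : ‖α‖ = 1) (hβ : ‖β‖ = 1) (hψ : ‖ψ‖ = 1) :
    (1 / 2) * (‖inner (𝕜 := ℂ) (LinearMap.adjoint U₀ α) ψ‖ ^ 2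
        + ‖inner (𝕜 := ℂ) (LinearMap.adjoint U₁ β) ψ‖ ^ 2)
      ≤ (1 / 2) * (1 + ‖inner (𝕜 := ℂ) α (U₀ (LinearMap.adjoint U₁ β))‖) :=
  stmt10_general U₀ U₁ hU02 hU12 α β ψ hα hβ hψ
end
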